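/- arXiv:0910.3509 — 3 statements merged into one kernel-verified Lean document; each statement's English description precedes it below -/
import Mathlib

section
/- Let f be a sub-modular function on a finite set V with f(∅) = 0, and let T ⊆ V. Then the facet F_{f,T} = {x ∈ P_f : x_T = f(T|T^c)} of the essential polytope P_f decomposes as a product: x ∈ F_{f,T} if and only if the restriction x|_T lies in the essential polytope of f₁(S) := f(S ∪ T^c) − f(T^c) on 2^T, and x|_{T^c} lies in the essential polytope of f₂(S) := f(S) on 2^{T^c}. -/
/-!
A point of the facet `x_T = f(V) - f(Tᶜ)` is tight on `Tᶜ`, so its constraints on subsets of `T`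
and of `Tᶜ` are exactly those of the two smaller polytopes. Conversely, the constraint of an
arbitrary `S` follows from those of `S ∩ T` and `S \ T` by submodularity applied to `Tᶜ` and `Sᶜ`.
-/

open Finset

/-- Membership in the essential polytope of a set function `g` with ground set `T`:
`∑_{v∈T} x v = g(T)` and `∑_{v∈S} x v ≥ g(S | T∖S) = g(T) − g(T∖S)` for all `S ⊆ T`. -/
def essMem {V : Type*} [Fintype V] [DecidableEq V] (T : Finset V)
    (g : Finset V → ℝ) (x : V → ℝ) : Prop :=
  (∑ v ∈ T, x v = g T) ∧ ∀ S ⊆ T, g T - g (T \ S) ≤ ∑ v ∈ S, x v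

section

variable {V : Type*} [Fintype V] [DecidableEq V] {f : Finset V → ℝ} {x : V → ℝ} {T : Finset V}

lemma essMem_univ_iff :
    essMem univ f x ↔ ∑ v, x v = f univ ∧ ∀ S, f univ - f Sᶜ ≤ ∑ v ∈ S, x v := by
  simp [essMem, compl_eq_univ_sdiff]

lemma sum_compl_eq_of_facet (hV : ∑ v, x v = f univ)
    (hT : ∑ v ∈ T, x v = f univ - f Tᶜ) : ∑ v ∈ Tᶜ, x v = f Tᶜ := by
  linarith [sum_add_sum_compl T x]

lemma essMem_contract_of_facet (hle : ∀ S, f univ - f Sᶜ ≤ ∑ v ∈ S, x v)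
    (hT : ∑ v ∈ T, x v = f univ - f Tᶜ) : essMem T (fun S => f (S ∪ Tᶜ) - f Tᶜ) x := by
  refine ⟨by simpa [union_compl] using hT, fun S hS => ?_⟩
  have hcompl : T \ S ∪ Tᶜ = Sᶜ := by
    ext v
    have := @hS v
    simp only [mem_union, mem_sdiff, mem_compl]
    tauto
  simpa [union_compl, hcompl] using hle S

lemma essMem_compl_of_facet (hV : ∑ v, x v = f univ)
    (hle : ∀ S, f univ - f Sᶜ ≤ ∑ v ∈ S, x v)
    (hT : ∑ v ∈ T, x v = f univ - f Tᶜ) : essMem Tᶜ f x := by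
  refine ⟨sum_compl_eq_of_facet hV hT, fun S hS => ?_⟩
  have hdisj : Disjoint S T := subset_compl_iff_disjoint_right.mp hS
  have hcompl : (S ∪ T)ᶜ = Tᶜ \ S := by
    rw [compl_union, sdiff_eq_inter_compl, inter_comm]
  have := hle (S ∪ T)
  rw [sum_union hdisj, hcompl] at this
  linarith

lemma le_sum_of_essMem_contract_of_essMem_compl
    (hsub : ∀ S T : Finset V, f (S ∩ T) + f (S ∪ T) ≤ f S + f T)
    (h₁ : essMem T (fun S => f (S ∪ Tᶜ) - f Tᶜ) x) (h₂ : essMem Tᶜ f x) (S : Finset V) :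
    f univ - f Sᶜ ≤ ∑ v ∈ S, x v := by
  have hT := h₁.2 (S ∩ T) inter_subset_right
  have hTc := h₂.2 (S \ T) fun v hv => mem_compl.mpr (mem_sdiff.mp hv).2
  have hsubmod := hsub Tᶜ Sᶜ
  have hcompl₁ : T \ (S ∩ T) ∪ Tᶜ = Tᶜ ∪ Sᶜ := by
    ext v
    simp only [mem_union, mem_sdiff, mem_inter, mem_compl]
    tauto
  have hcompl₂ : Tᶜ \ (S \ T) = Tᶜ ∩ Sᶜ := by
    ext v
    simp only [mem_sdiff, mem_inter, mem_compl]
    tauto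
  simp only [union_compl, hcompl₁] at hT
  rw [hcompl₂] at hTc
  linarith [sum_inter_add_sum_sdiff S T x]

end

theorem facet_decomposition_general {V : Type*} [Fintype V] [DecidableEq V]
    (f : Finset V → ℝ)
    (hsub : ∀ S T : Finset V, f (S ∩ T) + f (S ∪ T) ≤ f S + f T)
    (T : Finset V) (x : V → ℝ) :
    (essMem Finset.univ f x ∧ ∑ v ∈ T, x v = f Finset.univ - f Tᶜ) ↔
      (essMem T (fun S => f (S ∪ Tᶜ) - f Tᶜ) x ∧ essMem Tᶜ f x) := by
  rw [essMem_univ_iff]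
  constructor
  · rintro ⟨⟨hV, hle⟩, hT⟩
    exact ⟨essMem_contract_of_facet hle hT, essMem_compl_of_facet hV hle hT⟩
  · rintro ⟨h₁, h₂⟩
    have hT : ∑ v ∈ T, x v = f univ - f Tᶜ := by simpa [union_compl] using h₁.1
    refine ⟨⟨?_, le_sum_of_essMem_contract_of_essMem_compl hsub h₁ h₂⟩, hT⟩
    linarith [sum_add_sum_compl T x, h₂.1]

/-- Facet decomposition: for sub-modular `f` with `f(∅) = 0`, a point `x` lies on the
facet `F_{f,T} = {x ∈ P_f : x_T = f(T|Tᶜ)}` of the essential polytope `P_f` iff the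
restriction `x|_T` lies in the essential polytope of `f₁(S) = f(S ∪ Tᶜ) − f(Tᶜ)` on `2^T`
and `x|_{Tᶜ}` lies in the essential polytope of `f₂(S) = f(S)` on `2^{Tᶜ}`. -/
theorem facet_decomposition {V : Type*} [Fintype V] [DecidableEq V]
    (f : Finset V → ℝ)
    (hsub : ∀ S T : Finset V, f (S ∩ T) + f (S ∪ T) ≤ f S + f T)
    (h0 : f ∅ = 0) (T : Finset V) (x : V → ℝ) :
    (essMem Finset.univ f x ∧ ∑ v ∈ T, x v = f Finset.univ - f Tᶜ) ↔
      (essMem T (fun S => f (S ∪ Tᶜ) - f Tᶜ) x ∧ essMem Tᶜ f x) :=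
  facet_decomposition_general f hsub T x
end

section
/- Let f be sub-modular on V with f(∅)=0 and T ⊆ V. If x ∈ ℝ^V satisfies x|_T in the essential polytope of f₁(S) = f(S|T^c) on 2^T and x|_{T^c} in the essential polytope of f₂(S) = f(S) on 2^{T^c}, then for every U ⊆ V, x_U ≥ f(U | U^c); i.e., x lies on the facet F_{f,T} of P_f. -/
open Finset

/-!
Split `U = (U ∩ T) ∪ (U ∩ Tᶜ)`. The two polytope conditions bound the pieces from below by
`f(V) - f(Uᶜ ∪ Tᶜ)` and `f(Tᶜ) - f(Uᶜ ∩ Tᶜ)`, and by submodularity applied to `Uᶜ` and `Tᶜ`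
their sum is at least `f(V) - f(Uᶜ)`.
-/

section EssentialPolytope

variable {V : Type*} [Fintype V] [DecidableEq V]

theorem essMem.sub_le_sum_inter {T : Finset V} {g : Finset V → ℝ} {x : V → ℝ}
    (h : essMem T g x) (U : Finset V) : g T - g (T \ U) ≤ ∑ v ∈ U ∩ T, x v := by
  simpa only [sdiff_inter_self_right] using h.2 (U ∩ T) inter_subset_right

variable {f : Finset V → ℝ} {T : Finset V} {x : V → ℝ}

theorem essMem_contraction_sum_eq (h : essMem T (fun S => f (S ∪ Tᶜ) - f Tᶜ) x) :
    ∑ v ∈ T, x v = f univ - f Tᶜ := by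
  simpa only [union_compl] using h.1

theorem essMem_contraction_sub_le_sum_inter (h : essMem T (fun S => f (S ∪ Tᶜ) - f Tᶜ) x)
    (U : Finset V) : f univ - f (Tᶜ ∪ Uᶜ) ≤ ∑ v ∈ U ∩ T, x v := by
  have hset : T \ U ∪ Tᶜ = Tᶜ ∪ Uᶜ := by
    ext a
    by_cases ha : a ∈ T <;> simp [ha]
  simpa only [union_compl, hset, sub_sub_sub_cancel_right] using h.sub_le_sum_inter U

theorem sub_le_sum_of_essMem_contraction_of_essMem_compl
    (hsub : ∀ S T : Finset V, f (S ∩ T) + f (S ∪ T) ≤ f S + f T)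
    (hx1 : essMem T (fun S => f (S ∪ Tᶜ) - f Tᶜ) x) (hx2 : essMem Tᶜ f x) (U : Finset V) :
    f univ - f Uᶜ ≤ ∑ v ∈ U, x v := by
  have hT := essMem_contraction_sub_le_sum_inter hx1 U
  have hTc : f Tᶜ - f (Tᶜ ∩ Uᶜ) ≤ ∑ v ∈ U ∩ Tᶜ, x v := by
    simpa only [sdiff_eq_inter_compl] using hx2.sub_le_sum_inter U
  have hsplit : ∑ v ∈ U ∩ T, x v + ∑ v ∈ U ∩ Tᶜ, x v = ∑ v ∈ U, x v := by
    rw [← sdiff_eq_inter_compl, sum_inter_add_sum_sdiff]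
  linarith [hsub Tᶜ Uᶜ]

end EssentialPolytope

theorem mem_facet_of_product_general {V : Type*} [Fintype V] [DecidableEq V]
    (f : Finset V → ℝ)
    (hsub : ∀ S T : Finset V, f (S ∩ T) + f (S ∪ T) ≤ f S + f T)
    (T : Finset V) (x : V → ℝ)
    (hx1 : essMem T (fun S => f (S ∪ Tᶜ) - f Tᶜ) x)
    (hx2 : essMem Tᶜ f x) :
    (∀ U : Finset V, f Finset.univ - f Uᶜ ≤ ∑ v ∈ U, x v) ∧
    essMem Finset.univ f x ∧ (∑ v ∈ T, x v = f Finset.univ - f Tᶜ) := by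
  have key := sub_le_sum_of_essMem_contraction_of_essMem_compl hsub hx1 hx2
  have hT := essMem_contraction_sum_eq hx1
  have huniv : ∑ v ∈ univ, x v = f univ := by
    rw [← sum_add_sum_compl T x, hT, hx2.1]
    ring
  refine ⟨key, ⟨huniv, fun S _ => ?_⟩, hT⟩
  simpa only [compl_eq_univ_sdiff] using key S

/-- If `x|_T` lies in the essential polytope of `f₁(S) = f(S|Tᶜ)` on `2^T` and `x|_{Tᶜ}`
lies in the essential polytope of `f₂(S) = f(S)` on `2^{Tᶜ}`, then `x_U ≥ f(U|Uᶜ)` for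
every `U ⊆ V`, i.e. `x` lies on the facet `F_{f,T}` of `P_f`. -/
theorem mem_facet_of_product {V : Type*} [Fintype V] [DecidableEq V]
    (f : Finset V → ℝ)
    (hsub : ∀ S T : Finset V, f (S ∩ T) + f (S ∪ T) ≤ f S + f T)
    (h0 : f ∅ = 0) (T : Finset V) (x : V → ℝ)
    (hx1 : essMem T (fun S => f (S ∪ Tᶜ) - f Tᶜ) x)
    (hx2 : essMem Tᶜ f x) :
    (∀ U : Finset V, f Finset.univ - f Uᶜ ≤ ∑ v ∈ U, x v) ∧
    essMem Finset.univ f x ∧ (∑ v ∈ T, x v = f Finset.univ - f Tᶜ) :=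
  mem_facet_of_product_general f hsub T x hx1 hx2
end

section
/- With C and C* as above (L_k* = (T∩L_{k−1}) ∪ (T^c∩L_k)), for every S ⊆ T^c the layered conditional entropies satisfy h_C(S | T^c∖S) = h_{C*}(S | V∖S), where h_C(S) := Σ_{i=1}^{K+1} H(X_{S∩L_i} Y_{S∩L_{i−1}} | X_{L^i} Y_{L^{i−1}} Z) and h(A|B) := h(A∪B) − h(B). Hence the facet F_{h_C,T} of P_{h_C} coincides with the facet F_{h_{C*},T^c} of P_{h_{C*}}. -/
open Finset in
/-- Probability that the discrete random variable `X` takes the value `a`,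
under the weight function `p` on the finite sample space `Ω`. -/
noncomputable def pr {Ω : Type*} [Fintype Ω] {α : Type*} [DecidableEq α]
    (p : Ω → ℝ) (X : Ω → α) (a : α) : ℝ :=
  ∑ ω ∈ univ.filter (fun ω => X ω = a), p ω

/-- Shannon entropy (base 2) of a discrete random variable. (`0·log 0 = 0` since `logb 2 0 = 0`.) -/
noncomputable def ent {Ω : Type*} [Fintype Ω] {α : Type*} [Fintype α] [DecidableEq α]
    (p : Ω → ℝ) (X : Ω → α) : ℝ :=
  -∑ a : α, pr p X a * Real.logb 2 (pr p X a)

/-- Conditional Shannon entropy `H(X|Z) = H(X,Z) − H(Z)`. -/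
noncomputable def cent {Ω α β : Type*} [Fintype Ω] [Fintype α] [DecidableEq α]
    [Fintype β] [DecidableEq β] (p : Ω → ℝ) (X : Ω → α) (Z : Ω → β) : ℝ :=
  ent p (fun ω => (X ω, Z ω)) - ent p Z

/-- The tuple `X_S = (X_v : v ∈ S)` of a family of random variables, encoded with
`Option`: coordinates outside `S` are masked to `none`. -/
def mask {Ω V : Type*} [DecidableEq V] {α : V → Type*}
    (X : ∀ v, Ω → α v) (S : Finset V) : Ω → ∀ v, Option (α v) :=
  fun ω v => if v ∈ S then some (X v ω) else none

open Finset

/-- Layered conditional entropy term: `H(X_{AX} Y_{AY} | X_{BX} Y_{BY} Z)`, for families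
of discrete random variables `(X_v, Y_v : v ∈ V)` and side information `Z`. -/
noncomputable def ce {Ω V γ : Type*} [Fintype Ω] [Fintype V] [DecidableEq V]
    {α β : V → Type*} [∀ v, Fintype (α v)] [∀ v, DecidableEq (α v)]
    [∀ v, Fintype (β v)] [∀ v, DecidableEq (β v)] [Fintype γ] [DecidableEq γ]
    (p : Ω → ℝ) (X : ∀ v, Ω → α v) (Y : ∀ v, Ω → β v) (Z : Ω → γ)
    (AX AY BX BY : Finset V) : ℝ :=
  cent p (fun ω => (mask X AX ω, mask Y AY ω))
    (fun ω => (mask X BX ω, mask Y BY ω, Z ω))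

/-- `L^i = ∪_{k<i} L_k`, the union of the layers below layer `i`. -/
def lowUnion {V : Type*} [DecidableEq V] (L : ℕ → Finset V) (i : ℕ) : Finset V :=
  (Finset.range i).biUnion L

/-- `[L 1, …, L K]` is an ordered partition of `V` (with conventions `L 0 = ∅` and
`L i = ∅` for `i > K`). -/
def IsOrdPart {V : Type*} [Fintype V] [DecidableEq V] (K : ℕ) (L : ℕ → Finset V) : Prop :=
  (∀ i, 1 ≤ i → i ≤ K → (L i).Nonempty) ∧
  (∀ i, i = 0 ∨ K < i → L i = ∅) ∧
  (∀ i j, i ≠ j → Disjoint (L i) (L j)) ∧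
  (Finset.range (K + 1)).biUnion L = Finset.univ

/-- `h_C(S) = Σ_{i=1}^{K+1} H(X_{S∩L_i} Y_{S∩L_{i−1}} | X_{L^i} Y_{L^{i−1}} Z)`. -/
noncomputable def layerEnt {Ω V γ : Type*} [Fintype Ω] [Fintype V] [DecidableEq V]
    {α β : V → Type*} [∀ v, Fintype (α v)] [∀ v, DecidableEq (α v)]
    [∀ v, Fintype (β v)] [∀ v, DecidableEq (β v)] [Fintype γ] [DecidableEq γ]
    (p : Ω → ℝ) (X : ∀ v, Ω → α v) (Y : ∀ v, Ω → β v) (Z : Ω → γ)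
    (K : ℕ) (L : ℕ → Finset V) (S : Finset V) : ℝ :=
  ∑ i ∈ Finset.Icc 1 (K + 1),
    ce p X Y Z (S ∩ L i) (S ∩ L (i - 1)) (lowUnion L i) (lowUnion L (i - 1))

/-- `h_C(S|Sᶜ)`-style layered sum:
`Σ_{i=1}^{K+1} H(X_{S∩L_i} Y_{S∩L_{i−1}} | X_{L_i∖S} Y_{L_{i−1}∖S} X_{L^i} Y_{L^{i−1}} Z)`. -/
noncomputable def layerCondEnt {Ω V γ : Type*} [Fintype Ω] [Fintype V] [DecidableEq V]
    {α β : V → Type*} [∀ v, Fintype (α v)] [∀ v, DecidableEq (α v)]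
    [∀ v, Fintype (β v)] [∀ v, DecidableEq (β v)] [Fintype γ] [DecidableEq γ]
    (p : Ω → ℝ) (X : ∀ v, Ω → α v) (Y : ∀ v, Ω → β v) (Z : Ω → γ)
    (K : ℕ) (L : ℕ → Finset V) (S : Finset V) : ℝ :=
  ∑ i ∈ Finset.Icc 1 (K + 1),
    ce p X Y Z (S ∩ L i) (S ∩ L (i - 1))
      ((L i \ S) ∪ lowUnion L i) ((L (i - 1) \ S) ∪ lowUnion L (i - 1))

/-- The interleaved partition `L*_k = (T ∩ L_{k−1}) ∪ (Tᶜ ∩ L_k)`. -/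
def interleave {V : Type*} [Fintype V] [DecidableEq V] (L : ℕ → Finset V)
    (T : Finset V) (k : ℕ) : Finset V :=
  (T ∩ L (k - 1)) ∪ (Tᶜ ∩ L k)

/-- The facet `F_{f,T}` of the essential polytope of a set function `f` on `V`. -/
def facet {V : Type*} [Fintype V] [DecidableEq V] (f : Finset V → ℝ) (T : Finset V) :
    Set (V → ℝ) :=
  {x | ((∑ v, x v = f Finset.univ) ∧
    ∀ S : Finset V, f Finset.univ - f Sᶜ ≤ ∑ v ∈ S, x v) ∧
    ∑ v ∈ T, x v = f Finset.univ - f Tᶜ}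

/-!
Write `J(A, B) = H(X_A, Y_B, Z)`. Each layered entropy `h_C(S)` is the sum over the layers `i`
of `J` at the consecutive cuts `(S ∩ L_i) ∪ L^i`, minus the same sum for `S = ∅`. In `C*`, the
cuts of a set `U ⊆ T` are the cuts in `C` of `Tᶜ ∪ U` shifted by one layer, while the cuts of a
set `W ⊇ T` are the cuts in `C` of `W ∖ T` (the last layer of `C*` only adds `J(V, V)`). Hence
`h_{C*}(U) = h_C(U | Tᶜ)` for `U ⊆ T` and `h_C(U) = h_{C*}(U | T)` for `U ⊆ Tᶜ`; the second
identity yields the stated equality of conditional entropies. Both set functions are submodular by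
Shannon's inequality, and two submodular functions related by these two contractions have the
same facets `F_{h_C,T} = F_{h_{C*},Tᶜ}`.
-/

open Real

section Entropy

variable {Ω α β γ : Type*} [Fintype Ω] {p : Ω → ℝ}

lemma pr_nonneg [DecidableEq α] (hp : ∀ ω, 0 ≤ p ω) (X : Ω → α) (a : α) : 0 ≤ pr p X a :=
  sum_nonneg fun ω _ => hp ω

lemma sum_pr_mul [Fintype α] [DecidableEq α] (X : Ω → α) (g : α → ℝ) :
    ∑ a, pr p X a * g a = ∑ ω, p ω * g (X ω) := by
  simp only [pr, sum_mul]
  rw [← sum_fiberwise univ X (fun ω => p ω * g (X ω))]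
  refine sum_congr rfl fun a _ => sum_congr rfl fun ω hω => ?_
  rw [(mem_filter.1 hω).2]

lemma sum_pr [Fintype α] [DecidableEq α] (X : Ω → α) : ∑ a, pr p X a = ∑ ω, p ω := by
  simpa using sum_pr_mul (p := p) X fun _ => 1

lemma sum_pr_pair_left [Fintype α] [DecidableEq α] [DecidableEq β] (A : Ω → α) (C : Ω → β)
    (c : β) : ∑ a, pr p (fun ω => (A ω, C ω)) (a, c) = pr p C c := by
  simp only [pr, sum_filter]
  rw [sum_comm]
  refine sum_congr rfl fun ω _ => ?_
  simp only [Prod.mk.injEq, ite_and]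
  rw [sum_ite_eq univ (A ω)]
  simp

lemma pr_le_pr_comp [DecidableEq α] [DecidableEq β] (hp : ∀ ω, 0 ≤ p ω) (X : Ω → α)
    (f : α → β) (a : α) : pr p X a ≤ pr p (fun ω => f (X ω)) (f a) :=
  sum_le_sum_of_subset_of_nonneg (monotone_filter_right _ fun _ _ h => congrArg f h)
    fun ω _ _ => hp ω

lemma pr_apply_congr [DecidableEq α] [DecidableEq β] {X : Ω → α} {Y : Ω → β}
    (h : ∀ ω ω', X ω = X ω' ↔ Y ω = Y ω') (ω : Ω) : pr p X (X ω) = pr p Y (Y ω) := by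
  simp only [pr]
  rw [filter_congr fun ω' _ => h ω' ω]

lemma ent_eq_sum [Fintype α] [DecidableEq α] (X : Ω → α) :
    ent p X = -∑ ω, p ω * logb 2 (pr p X (X ω)) := by
  rw [ent, sum_pr_mul X fun a => logb 2 (pr p X a)]

lemma ent_congr [Fintype α] [DecidableEq α] [Fintype β] [DecidableEq β] {X : Ω → α}
    {Y : Ω → β} (h : ∀ ω ω', X ω = X ω' ↔ Y ω = Y ω') : ent p X = ent p Y := by
  simp only [ent_eq_sum, pr_apply_congr h]

lemma ent_comp_eq [Fintype α] [DecidableEq α] [Fintype β] [DecidableEq β] (Q : Ω → α)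
    (f : α → β) :
    ent p (fun ω => f (Q ω)) = -∑ t, pr p Q t * logb 2 (pr p (fun ω => f (Q ω)) (f t)) := by
  rw [ent_eq_sum, sum_pr_mul Q fun t => logb 2 (pr p (fun ω => f (Q ω)) (f t))]

lemma sum_mul_log_div_le_zero {ι : Type*} (s : Finset ι) {q b : ι → ℝ}
    (hq : ∀ i ∈ s, 0 ≤ q i) (hb : ∀ i ∈ s, 0 ≤ b i) (hpos : ∀ i ∈ s, 0 < q i → 0 < b i)
    (hsum : ∑ i ∈ s, b i ≤ ∑ i ∈ s, q i) : ∑ i ∈ s, q i * log (b i / q i) ≤ 0 := by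
  calc ∑ i ∈ s, q i * log (b i / q i) ≤ ∑ i ∈ s, (b i - q i) := by
        refine sum_le_sum fun i hi => ?_
        rcases (hq i hi).eq_or_lt with hq0 | hq0
        · simp [← hq0, hb i hi]
        · calc q i * log (b i / q i) ≤ q i * (b i / q i - 1) :=
                mul_le_mul_of_nonneg_left (log_le_sub_one_of_pos (div_pos (hpos i hi hq0) hq0))
                  hq0.le
            _ = b i - q i := by field_simp
    _ ≤ 0 := by rw [sum_sub_distrib]; linarith

lemma ent_submodular [Fintype α] [DecidableEq α] [Fintype β] [DecidableEq β] [Fintype γ]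
    [DecidableEq γ] (hp : ∀ ω, 0 ≤ p ω) (U : Ω → α) (V : Ω → β) (W : Ω → γ) :
    ent p (fun ω => (U ω, V ω, W ω)) + ent p W ≤
      ent p (fun ω => (U ω, W ω)) + ent p (fun ω => (V ω, W ω)) := by
  set Q : Ω → α × β × γ := fun ω => (U ω, V ω, W ω)
  set q := pr p Q
  set pUW := pr p (fun ω => (U ω, W ω))
  set pVW := pr p (fun ω => (V ω, W ω))
  set pW := pr p W
  -- the law of `(U, V, W)` under which `U` and `V` are conditionally independent given `W`
  set b : α × β × γ → ℝ := fun t => pUW (t.1, t.2.2) * pVW (t.2.1, t.2.2) / pW t.2.2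
  have hb_sum : ∑ t, b t = ∑ t, q t := by
    calc ∑ t, b t = ∑ c, (∑ a, pUW (a, c)) * (∑ d, pVW (d, c)) / pW c := by
          simp only [b, Fintype.sum_prod_type, sum_mul_sum, sum_div]
          exact (sum_congr rfl fun _ _ => sum_comm).trans sum_comm
      _ = ∑ t, q t := by
          -- `x * x / x = x` also at `x = 0`, where the division is junk
          simp only [pUW, pVW, pW, sum_pr_pair_left, mul_self_div_self, sum_pr]
          exact (sum_pr Q).symm
  have hmarg : ∀ t, 0 < q t → 0 < pUW (t.1, t.2.2) ∧ 0 < pVW (t.2.1, t.2.2) ∧ 0 < pW t.2.2 :=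
    fun t hq0 => ⟨hq0.trans_le (pr_le_pr_comp hp Q (fun t => (t.1, t.2.2)) t),
      hq0.trans_le (pr_le_pr_comp hp Q (fun t => (t.2.1, t.2.2)) t),
      hq0.trans_le (pr_le_pr_comp hp Q (fun t => t.2.2) t)⟩
  have hterm : ∀ t, q t * logb 2 (b t / q t) = q t * logb 2 (pUW (t.1, t.2.2))
      + q t * logb 2 (pVW (t.2.1, t.2.2)) - q t * logb 2 (q t) - q t * logb 2 (pW t.2.2) := by
    intro t
    rcases (pr_nonneg hp Q t).eq_or_lt with hq0 | hq0
    · simp [q, ← hq0]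
    obtain ⟨huw, hvw, hw⟩ := hmarg t hq0
    rw [logb_div (by positivity) hq0.ne', logb_div (by positivity) hw.ne',
      logb_mul huw.ne' hvw.ne']
    ring
  have hgibbs : ∑ t, q t * logb 2 (b t / q t) ≤ 0 := by
    simp only [logb, ← mul_div_assoc, ← sum_div]
    refine div_nonpos_of_nonpos_of_nonneg ?_ (log_nonneg one_le_two)
    refine sum_mul_log_div_le_zero univ (fun t _ => pr_nonneg hp Q t) (fun t _ => ?_)
      (fun t _ hq0 => ?_) hb_sum.le
    · exact div_nonneg (mul_nonneg (pr_nonneg hp _ _) (pr_nonneg hp _ _)) (pr_nonneg hp _ _)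
    · obtain ⟨huw, hvw, hw⟩ := hmarg t hq0
      positivity
  rw [show ent p W = ent p (fun ω => (Q ω).2.2) from rfl, ent_comp_eq Q (fun t => t.2.2),
    ent_comp_eq Q (fun t => (t.1, t.2.2)), ent_comp_eq Q (fun t => (t.2.1, t.2.2)), ent]
  simp only [hterm, sum_add_distrib, sum_sub_distrib] at hgibbs
  linarith

end Entropy

section Layers

variable {Ω V γ : Type*} [Fintype Ω] [Fintype V] [DecidableEq V]
  {α β : V → Type*} [∀ v, Fintype (α v)] [∀ v, DecidableEq (α v)]
  [∀ v, Fintype (β v)] [∀ v, DecidableEq (β v)] [Fintype γ] [DecidableEq γ]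
  (p : Ω → ℝ) (X : ∀ v, Ω → α v) (Y : ∀ v, Ω → β v) (Z : Ω → γ)

omit [Fintype Ω] [Fintype V] [∀ v, Fintype (α v)] [∀ v, DecidableEq (α v)] in
lemma mask_eq_iff {A : Finset V} {ω ω' : Ω} :
    mask X A ω = mask X A ω' ↔ ∀ v ∈ A, X v ω = X v ω' := by
  simp only [mask, funext_iff]
  refine forall_congr' fun v => ?_
  by_cases hv : v ∈ A <;> simp [hv]

noncomputable def jointEnt (A B : Finset V) : ℝ :=
  ent p (fun ω => (mask X A ω, mask Y B ω, Z ω))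

set_option synthInstance.maxSize 2000 in
lemma ce_eq_jointEnt_sub (AX AY BX BY : Finset V) :
    ce p X Y Z AX AY BX BY = jointEnt p X Y Z (AX ∪ BX) (AY ∪ BY) - jointEnt p X Y Z BX BY := by
  rw [ce, cent, jointEnt, jointEnt]
  congr 1
  refine ent_congr fun ω ω' => ?_
  simp only [Prod.ext_iff, mask_eq_iff, forall_mem_union]
  tauto

set_option synthInstance.maxSize 2000 in
lemma jointEnt_union_add_jointEnt_inter_le (hp : ∀ ω, 0 ≤ p ω) (A A' B B' : Finset V) :
    jointEnt p X Y Z (A ∪ A') (B ∪ B') + jointEnt p X Y Z (A ∩ A') (B ∩ B') ≤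
      jointEnt p X Y Z A B + jointEnt p X Y Z A' B' := by
  have key := ent_submodular hp (fun ω => (mask X A ω, mask Y B ω))
    (fun ω => (mask X A' ω, mask Y B' ω)) (fun ω => (mask X (A ∩ A') ω, mask Y (B ∩ B') ω, Z ω))
  have e₁ : ent p (fun ω => ((mask X A ω, mask Y B ω), (mask X A' ω, mask Y B' ω),
      mask X (A ∩ A') ω, mask Y (B ∩ B') ω, Z ω)) = jointEnt p X Y Z (A ∪ A') (B ∪ B') :=
    ent_congr fun ω ω' => by
      simp only [Prod.ext_iff, mask_eq_iff, forall_mem_union, mem_inter]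
      aesop
  have e₂ : ∀ C D, A ∩ A' ⊆ C → B ∩ B' ⊆ D → ent p (fun ω => ((mask X C ω, mask Y D ω),
      mask X (A ∩ A') ω, mask Y (B ∩ B') ω, Z ω)) = jointEnt p X Y Z C D :=
    fun C D hC hD => ent_congr fun ω ω' => by
      simp only [Prod.ext_iff, mask_eq_iff]
      exact ⟨fun h => ⟨h.1.1, h.1.2, h.2.2.2⟩, fun h =>
        ⟨⟨h.1, h.2.1⟩, fun v hv => h.1 v (hC hv), fun v hv => h.2.1 v (hD hv), h.2.2⟩⟩
  rw [e₁, e₂ A B inter_subset_left inter_subset_left,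
    e₂ A' B' inter_subset_right inter_subset_right] at key
  exact key

noncomputable def chainEnt (φ : ℕ → Finset V) (n : ℕ) : ℝ :=
  ∑ i ∈ Icc 1 n, jointEnt p X Y Z (φ i) (φ (i - 1))

lemma chainEnt_succ (φ : ℕ → Finset V) (n : ℕ) :
    chainEnt p X Y Z φ (n + 1) = chainEnt p X Y Z φ n + jointEnt p X Y Z (φ (n + 1)) (φ n) :=
  sum_Icc_succ_top (by omega) _

lemma chainEnt_comp_pred (φ : ℕ → Finset V) (n : ℕ) :
    chainEnt p X Y Z (fun i => φ (i - 1)) (n + 1) =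
      jointEnt p X Y Z (φ 0) (φ 0) + chainEnt p X Y Z φ n := by
  induction n with
  | zero => simp [chainEnt]
  | succ n ih => rw [chainEnt_succ, ih, chainEnt_succ, add_assoc]; rfl

lemma chainEnt_sup_add_chainEnt_inf_le (hp : ∀ ω, 0 ≤ p ω) (φ ψ : ℕ → Finset V) (n : ℕ) :
    chainEnt p X Y Z (φ ⊔ ψ) n + chainEnt p X Y Z (φ ⊓ ψ) n ≤
      chainEnt p X Y Z φ n + chainEnt p X Y Z ψ n := by
  simp only [chainEnt, ← sum_add_distrib]
  exact sum_le_sum fun i _ => jointEnt_union_add_jointEnt_inter_le p X Y Z hp _ _ _ _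

def layerCut (L : ℕ → Finset V) (S : Finset V) (i : ℕ) : Finset V :=
  S ∩ L i ∪ lowUnion L i

omit [Fintype V] in
lemma layerCut_union (L : ℕ → Finset V) (S S' : Finset V) :
    layerCut L (S ∪ S') = layerCut L S ⊔ layerCut L S' := by
  ext i v
  simp only [layerCut, Pi.sup_apply, sup_eq_union, mem_union, mem_inter]
  tauto

omit [Fintype V] in
lemma layerCut_inter (L : ℕ → Finset V) (S S' : Finset V) :
    layerCut L (S ∩ S') = layerCut L S ⊓ layerCut L S' := by
  ext i v
  simp only [layerCut, Pi.inf_apply, inf_eq_inter, mem_union, mem_inter]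
  tauto

lemma layerEnt_eq_chainEnt_sub (K : ℕ) (L : ℕ → Finset V) (S : Finset V) :
    layerEnt p X Y Z K L S =
      chainEnt p X Y Z (layerCut L S) (K + 1) - chainEnt p X Y Z (layerCut L ∅) (K + 1) := by
  simp only [layerEnt, chainEnt, ce_eq_jointEnt_sub, ← sum_sub_distrib, layerCut, empty_inter,
    empty_union]

lemma layerEnt_union_add_layerEnt_inter_le (hp : ∀ ω, 0 ≤ p ω) (K : ℕ) (L : ℕ → Finset V)
    (S S' : Finset V) :
    layerEnt p X Y Z K L (S ∪ S') + layerEnt p X Y Z K L (S ∩ S') ≤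
      layerEnt p X Y Z K L S + layerEnt p X Y Z K L S' := by
  have := chainEnt_sup_add_chainEnt_inf_le p X Y Z hp (layerCut L S) (layerCut L S') (K + 1)
  simp only [layerEnt_eq_chainEnt_sub, layerCut_union, layerCut_inter]
  linarith

section Interleave

variable {L : ℕ → Finset V} {T : Finset V}

omit [Fintype V] in
lemma lowUnion_succ (M : ℕ → Finset V) (k : ℕ) : lowUnion M (k + 1) = M k ∪ lowUnion M k := by
  simp [lowUnion, range_add_one]

lemma lowUnion_interleave_succ (hL0 : L 0 = ∅) (k : ℕ) :
    lowUnion (interleave L T) (k + 1) = Tᶜ ∩ L k ∪ lowUnion L k := by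
  induction k with
  | zero => simp [lowUnion, interleave, hL0]
  | succ k ih =>
    rw [lowUnion_succ, ih, lowUnion_succ]
    ext v
    simp only [interleave, Nat.add_sub_cancel, mem_union, mem_inter, mem_compl]
    tauto

lemma layerCut_interleave_of_subset (hL0 : L 0 = ∅) {U : Finset V} (hU : U ⊆ T) (i : ℕ) :
    layerCut (interleave L T) U i = layerCut L (Tᶜ ∪ U) (i - 1) := by
  cases i with
  | zero => simp [layerCut, lowUnion, interleave, hL0]
  | succ k =>
    rw [layerCut, layerCut, lowUnion_interleave_succ hL0, Nat.add_sub_cancel]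
    ext v
    have := @hU v
    simp only [interleave, Nat.add_sub_cancel, mem_union, mem_inter, mem_compl]
    tauto

lemma layerCut_interleave_of_superset (hL0 : L 0 = ∅) {W : Finset V} (hW : T ⊆ W) (i : ℕ) :
    layerCut (interleave L T) W i = layerCut L (W \ T) i := by
  cases i with
  | zero => simp [layerCut, lowUnion, interleave, hL0]
  | succ k =>
    rw [layerCut, layerCut, lowUnion_interleave_succ hL0, lowUnion_succ]
    ext v
    have := @hW v
    simp only [interleave, Nat.add_sub_cancel, mem_union, mem_inter, mem_compl, mem_sdiff]
    tauto

lemma layerCut_eq_univ {K : ℕ} (hcover : lowUnion L (K + 1) = univ) (S : Finset V) {i : ℕ}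
    (hi : K + 1 ≤ i) : layerCut L S i = univ :=
  eq_univ_of_forall fun v => mem_union_right _ <|
    biUnion_subset_biUnion_of_subset_left L (range_subset_range.2 hi)
      (show v ∈ lowUnion L (K + 1) from hcover ▸ mem_univ v)

lemma layerEnt_interleave_of_subset (hL0 : L 0 = ∅) (K : ℕ) {U : Finset V} (hU : U ⊆ T) :
    layerEnt p X Y Z (K + 1) (interleave L T) U =
      layerEnt p X Y Z K L (Tᶜ ∪ U) - layerEnt p X Y Z K L Tᶜ := by
  have hcut : ∀ U ⊆ T, layerCut (interleave L T) U = fun i => layerCut L (Tᶜ ∪ U) (i - 1) :=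
    fun U hU => funext (layerCut_interleave_of_subset hL0 hU)
  have hcut0 : ∀ S, layerCut L S 0 = ∅ := by simp [layerCut, lowUnion, hL0]
  simp only [layerEnt_eq_chainEnt_sub, hcut U hU, hcut ∅ (empty_subset T), chainEnt_comp_pred,
    hcut0, union_empty]
  ring

lemma layerEnt_interleave_union (hL0 : L 0 = ∅) {K : ℕ} (hcover : lowUnion L (K + 1) = univ)
    {U : Finset V} (hU : U ⊆ Tᶜ) :
    layerEnt p X Y Z K L U =
      layerEnt p X Y Z (K + 1) (interleave L T) (T ∪ U) -
        layerEnt p X Y Z (K + 1) (interleave L T) T := by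
  simp only [layerEnt_eq_chainEnt_sub,
    funext (layerCut_interleave_of_superset hL0 (subset_union_left (s₂ := U))),
    funext (layerCut_interleave_of_superset hL0 (subset_refl T)),
    union_sdiff_cancel_left (subset_compl_iff_disjoint_left.1 hU), sdiff_self, bot_eq_empty,
    chainEnt_succ _ _ _ _ _ (K + 1), layerCut_eq_univ hcover _ (Nat.le_succ _),
    layerCut_eq_univ hcover _ le_rfl]
  ring

end Interleave

end Layers

section Facet

variable {V : Type*} [Fintype V] [DecidableEq V] {f g : Finset V → ℝ} {T : Finset V}

lemma mem_facet_iff {x : V → ℝ} :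
    x ∈ facet f T ↔
      (∑ v, x v = f univ ∧ ∀ W, ∑ v ∈ W, x v ≤ f W) ∧ ∑ v ∈ Tᶜ, x v = f Tᶜ := by
  have hcompl : ∀ S : Finset V, ∑ v ∈ S, x v + ∑ v ∈ Sᶜ, x v = ∑ v, x v :=
    fun S => sum_add_sum_compl S x
  simp only [facet, Set.mem_ofPred_eq]
  constructor
  · rintro ⟨⟨hsum, hle⟩, hT⟩
    refine ⟨⟨hsum, fun W => ?_⟩, by linarith [hcompl T]⟩
    have := hle Wᶜ
    rw [compl_compl] at this
    linarith [hcompl W]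
  · rintro ⟨⟨hsum, hle⟩, hT⟩
    exact ⟨⟨hsum, fun S => by linarith [hle Sᶜ, hcompl S]⟩, by linarith [hcompl T]⟩

/-- A point of `F_{f,T}` is tight on `Tᶜ`, so its restrictions to `T` and to `Tᶜ` are dominated
by the two contractions, and submodularity of `g` glues the two bounds together. -/
lemma facet_subset_facet_compl (hg_sub : ∀ S S', g (S ∪ S') + g (S ∩ S') ≤ g S + g S')
    (hg : ∀ U ⊆ T, g U = f (Tᶜ ∪ U) - f Tᶜ) (hf : ∀ U ⊆ Tᶜ, f U = g (T ∪ U) - g T) :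
    facet f T ⊆ facet g Tᶜ := by
  have hgT : g T = f univ - f Tᶜ := by rw [hg T subset_rfl, union_comm Tᶜ T, union_compl]
  have huniv : g univ = f univ := by
    have := hf Tᶜ subset_rfl
    rw [union_compl] at this
    linarith
  intro x hx
  rw [mem_facet_iff] at hx ⊢
  obtain ⟨⟨hsum, hle⟩, hTc⟩ := hx
  refine ⟨⟨huniv ▸ hsum, fun W => ?_⟩, by rw [compl_compl]; linarith [sum_add_sum_compl T x]⟩
  have hin : ∑ v ∈ W ∩ T, x v ≤ g (W ∩ T) := by
    have := hle (Tᶜ ∪ W ∩ T)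
    rw [sum_union (disjoint_compl_left.mono_right inter_subset_right)] at this
    rw [hg _ inter_subset_right]
    linarith
  have hout : ∑ v ∈ W \ T, x v ≤ g (T ∪ W) - g T := by
    have hWT : W \ T ⊆ Tᶜ := by rw [sdiff_eq_inter_compl]; exact inter_subset_right
    rw [← union_sdiff_self_eq_union, ← hf _ hWT]
    exact hle _
  have := hg_sub W T
  rw [union_comm] at this
  linarith [sum_inter_add_sum_sdiff W T x]

lemma facet_eq_facet_compl (hf_sub : ∀ S S', f (S ∪ S') + f (S ∩ S') ≤ f S + f S')
    (hg_sub : ∀ S S', g (S ∪ S') + g (S ∩ S') ≤ g S + g S')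
    (hg : ∀ U ⊆ T, g U = f (Tᶜ ∪ U) - f Tᶜ) (hf : ∀ U ⊆ Tᶜ, f U = g (T ∪ U) - g T) :
    facet f T = facet g Tᶜ := by
  refine (facet_subset_facet_compl hg_sub hg hf).antisymm ?_
  simpa only [compl_compl] using facet_subset_facet_compl (T := Tᶜ) hf_sub
    (by simpa only [compl_compl] using hf) (by simpa only [compl_compl] using hg)

end Facet

theorem interleave_facet_eq_general {Ω V γ : Type*} [Fintype Ω] [Fintype V] [DecidableEq V]
    {α β : V → Type*} [∀ v, Fintype (α v)] [∀ v, DecidableEq (α v)]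
    [∀ v, Fintype (β v)] [∀ v, DecidableEq (β v)] [Fintype γ] [DecidableEq γ]
    (p : Ω → ℝ) (hp0 : ∀ ω, 0 ≤ p ω)
    (X : ∀ v, Ω → α v) (Y : ∀ v, Ω → β v) (Z : Ω → γ)
    (K : ℕ) (L : ℕ → Finset V) (hL : IsOrdPart K L) (T : Finset V) :
    (∀ S ⊆ Tᶜ,
      layerEnt p X Y Z K L Tᶜ - layerEnt p X Y Z K L (Tᶜ \ S) =
        layerEnt p X Y Z (K + 1) (interleave L T) Finset.univ -
          layerEnt p X Y Z (K + 1) (interleave L T) Sᶜ) ∧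
    facet (layerEnt p X Y Z K L) T =
      facet (layerEnt p X Y Z (K + 1) (interleave L T)) Tᶜ := by
  have hL0 : L 0 = ∅ := hL.2.1 0 (Or.inl rfl)
  have hf : ∀ U ⊆ Tᶜ, layerEnt p X Y Z K L U =
      layerEnt p X Y Z (K + 1) (interleave L T) (T ∪ U) -
        layerEnt p X Y Z (K + 1) (interleave L T) T :=
    fun U hU => layerEnt_interleave_union p X Y Z hL0 hL.2.2.2 hU
  refine ⟨fun S hS => ?_, facet_eq_facet_compl
    (layerEnt_union_add_layerEnt_inter_le p X Y Z hp0 K L)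
    (layerEnt_union_add_layerEnt_inter_le p X Y Z hp0 (K + 1) (interleave L T))
    (fun U hU => layerEnt_interleave_of_subset p X Y Z hL0 K hU) hf⟩
  have hSc : T ∪ Tᶜ \ S = Sᶜ := by
    ext v
    have := @hS v
    simp only [mem_union, mem_sdiff, mem_compl] at this ⊢
    tauto
  rw [hf Tᶜ subset_rfl, hf (Tᶜ \ S) sdiff_subset, union_compl, hSc]
  ring

/-- For the interleaved partition `C*` (with `K+1` layers, `L_k* = (T∩L_{k−1}) ∪ (Tᶜ∩L_k)`),
the layered conditional entropies satisfy `h_C(S | Tᶜ∖S) = h_{C*}(S | V∖S)` for every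
`S ⊆ Tᶜ`; hence the facet `F_{h_C,T}` of `P_{h_C}` coincides with the facet
`F_{h_{C*},Tᶜ}` of `P_{h_{C*}}`. -/
theorem interleave_facet_eq {Ω V γ : Type*} [Fintype Ω] [Fintype V] [DecidableEq V]
    {α β : V → Type*} [∀ v, Fintype (α v)] [∀ v, DecidableEq (α v)]
    [∀ v, Fintype (β v)] [∀ v, DecidableEq (β v)] [Fintype γ] [DecidableEq γ]
    (p : Ω → ℝ) (hp0 : ∀ ω, 0 ≤ p ω) (hp1 : ∑ ω, p ω = 1)
    (X : ∀ v, Ω → α v) (Y : ∀ v, Ω → β v) (Z : Ω → γ)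
    (K : ℕ) (L : ℕ → Finset V) (hL : IsOrdPart K L) (T : Finset V) :
    (∀ S ⊆ Tᶜ,
      layerEnt p X Y Z K L Tᶜ - layerEnt p X Y Z K L (Tᶜ \ S) =
        layerEnt p X Y Z (K + 1) (interleave L T) Finset.univ -
          layerEnt p X Y Z (K + 1) (interleave L T) Sᶜ) ∧
    facet (layerEnt p X Y Z K L) T =
      facet (layerEnt p X Y Z (K + 1) (interleave L T)) Tᶜ :=
  interleave_facet_eq_general p hp0 X Y Z K L hL T
end
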